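/- arXiv:cs/0001026 — 5 statements merged into one kernel-verified Lean document; each statement's English description precedes it below -/
import Mathlib

section
/- Continuity of interpretation (Lemma A.1): if l_0 ≤ l_1 ≤ … is an increasing sequence of local name assignments and l_ω is its pointwise supremum (l_ω(k,n) = ⋃_{m∈ℕ} l_m(k,n)), then for every principal expression p, every world w, and every key k, ⟦p⟧_{w,l_ω,k} = ⋃_{m∈ℕ} ⟦p⟧_{w,l_m,k}. -/
/-- Principal expressions over keys `K`, global names `G`, local names `N`. -/
inductive PExp (K G N : Type*) where
  | key : K → PExp K G N
  | glob : G → PExp K G N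
  | loc : N → PExp K G N
  | s : PExp K G N → PExp K G N → PExp K G N

/-- Formulas of LLNC. -/
inductive Fml (K G N : Type*) where
  | bdto : PExp K G N → PExp K G N → Fml K G N
  | cert : K → Fml K G N → Fml K G N
  | not : Fml K G N → Fml K G N
  | and : Fml K G N → Fml K G N → Fml K G N

/-- A world: an interpretation of global names and an assignment of
certificates to keys, with only finitely many certificates issued. -/
structure World (K G N : Type*) where
  beta : G → Set K
  certs : K → Set (Fml K G N)
  finite_certs : (⋃ k, certs k).Finite

variable {K G N : Type*}

/-- The interpretation of a principal expression relative to a world, a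
local name assignment, and a key. -/
def interp (w : World K G N) (l : K → N → Set K) : PExp K G N → K → Set K
  | .key k', _ => {k'}
  | .glob g, _ => w.beta g
  | .loc n, k => l k n
  | .s p q, k => ⋃ k' ∈ interp w l p k, interp w l q k'

/-- Satisfaction of a formula at a world, local name assignment, and key. -/
def Sat (w : World K G N) (l : K → N → Set K) (k : K) : Fml K G N → Prop
  | .bdto p q => interp w l q k ⊆ interp w l p k
  | .cert k' φ => φ ∈ w.certs k'
  | .not φ => ¬ Sat w l k φ
  | .and φ ψ => Sat w l k φ ∧ Sat w l k ψ

/-- A local name assignment is consistent with a world if every issued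
binding certificate holds at the issuer. -/
def Consistent (w : World K G N) (l : K → N → Set K) : Prop :=
  ∀ (k : K) (n : N) (p : PExp K G N),
    Fml.bdto (.loc n) p ∈ w.certs k → Sat w l k (.bdto (.loc n) p)

theorem interp_mono (w : World K G N) {l l' : K → N → Set K} (h : l ≤ l') (p : PExp K G N)
    (k : K) : interp w l p k ⊆ interp w l' p k := by
  induction p generalizing k with
  | key k' => exact subset_rfl
  | glob g => exact subset_rfl
  | loc n => exact h k n
  | s p q ihp ihq => exact Set.biUnion_mono (ihp k) fun k' _ => ihq k'

theorem interp_iSup {ι : Type*} [Nonempty ι] (w : World K G N) {l : ι → K → N → Set K}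
    (hl : Directed (· ≤ ·) l) (p : PExp K G N) (k : K) :
    interp w (⨆ i, l i) p k = ⋃ i, interp w (l i) p k := by
  refine (Set.iUnion_subset fun i => interp_mono w (le_iSup l i) p k).antisymm' ?_
  induction p generalizing k with
  | key k' => simp only [interp, Set.iUnion_const, subset_rfl]
  | glob g => simp only [interp, Set.iUnion_const, subset_rfl]
  | loc n => simp only [interp, iSup_apply, Set.iSup_eq_iUnion, subset_rfl]
  | s p q ihp ihq =>
    simp only [interp, Set.iUnion_subset_iff]
    intro k' hk' x hx
    obtain ⟨i, hi⟩ := Set.mem_iUnion.mp (ihp k hk')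
    obtain ⟨j, hj⟩ := Set.mem_iUnion.mp (ihq k' hx)
    -- the two witnesses come from members `i` and `j`; directedness puts both in one member `m`
    obtain ⟨m, him, hjm⟩ := hl i j
    exact Set.mem_iUnion.mpr ⟨m, Set.mem_biUnion (interp_mono w him p k hi)
      (interp_mono w hjm q k' hj)⟩

theorem interp_continuous_general (lseq : ℕ → K → N → Set K)
    (hmono : ∀ (m : ℕ) (k : K) (n : N), lseq m k n ⊆ lseq (m + 1) k n)
    (lω : K → N → Set K) (hlω : ∀ (k : K) (n : N), lω k n = ⋃ m : ℕ, lseq m k n)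
    (p : PExp K G N) (w : World K G N) (k : K) :
    interp w lω p k = ⋃ m : ℕ, interp w (lseq m) p k := by
  have hsup : lω = ⨆ m, lseq m := by
    ext k n x
    simp only [hlω, iSup_apply, Set.iSup_eq_iUnion]
  have hdir : Directed (· ≤ ·) lseq :=
    (monotone_nat_of_le_succ hmono).directed_le
  rw [hsup, interp_iSup w hdir]

/-- Lemma A.1: Continuity of interpretation: the interpretation of
a principal expression under the pointwise supremum of an increasing sequence of
local name assignments is the union of the interpretations under the members of
the sequence. -/
theorem interp_continuous [Nonempty K] (lseq : ℕ → K → N → Set K)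
    (hmono : ∀ (m : ℕ) (k : K) (n : N), lseq m k n ⊆ lseq (m + 1) k n)
    (lω : K → N → Set K) (hlω : ∀ (k : K) (n : N), lω k n = ⋃ m : ℕ, lseq m k n)
    (p : PExp K G N) (w : World K G N) (k : K) :
    interp w lω p k = ⋃ m : ℕ, interp w (lseq m) p k :=
  interp_continuous_general lseq hmono lω hlω p w k
end

section
/- Theorem 3.2 (infinite case): If the set K of keys is infinite, then the axiom system AX_inf is sound and complete with respect to the open semantics of LLNC: a formula φ is provable in AX_inf if and only if φ is o-valid. -/
variable {K G N : Type*}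

/-- `lw` is the (unique) minimal local name assignment consistent with `w`. -/
def IsMinConsistent (w : World K G N) (lw : K → N → Set K) : Prop :=
  Consistent w lw ∧ ∀ l, Consistent w l → ∀ (k : K) (n : N), lw k n ⊆ l k n

/-- Open-semantics satisfaction: satisfaction with a consistent assignment. -/
def OSat (w : World K G N) (l : K → N → Set K) (k : K) (φ : Fml K G N) : Prop :=
  Sat w l k φ ∧ Consistent w l

/-- `φ` is o-satisfiable. -/
def OSatisfiable (φ : Fml K G N) : Prop :=
  ∃ (w : World K G N) (l : K → N → Set K) (k : K), OSat w l k φ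

/-- `φ` is o-valid: no triple satisfies `¬φ` under the open semantics. -/
def OValid (φ : Fml K G N) : Prop :=
  ¬ ∃ (w : World K G N) (l : K → N → Set K) (k : K), OSat w l k (.not φ)

/-- `φ` is c-satisfiable: some world and key satisfy it under the minimal
consistent local name assignment of the world. -/
def CSatisfiable (φ : Fml K G N) : Prop :=
  ∃ (w : World K G N) (k : K) (lw : K → N → Set K), IsMinConsistent w lw ∧ Sat w lw k φ

/-- `φ` is c-valid: every world and key satisfy it under the minimal
consistent local name assignment of the world. -/
def CValid (φ : Fml K G N) : Prop :=
  ∀ (w : World K G N) (k : K) (lw : K → N → Set K), IsMinConsistent w lw → Sat w lw k φ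

/-- Material implication, as a classical abbreviation. -/
def Fml.imp (φ ψ : Fml K G N) : Fml K G N := .not (.and φ (.not ψ))

/-- Disjunction, as a classical abbreviation. -/
def Fml.or (φ ψ : Fml K G N) : Fml K G N := .not (.and (.not φ) (.not ψ))

/-- Biconditional, as a classical abbreviation. -/
def Fml.iff (φ ψ : Fml K G N) : Fml K G N := .and (φ.imp ψ) (ψ.imp φ)

/-- Boolean evaluation of a formula treating `▷`- and `cert`-formulas as atoms. -/
def evalB (v : Fml K G N → Bool) : Fml K G N → Bool
  | .not φ => !(evalB v φ)
  | .and φ ψ => evalB v φ && evalB v ψ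
  | φ => v φ

/-- `φ` is an instance of a propositional tautology. -/
def Tautology (φ : Fml K G N) : Prop := ∀ v : Fml K G N → Bool, evalB v φ = true

/-- Global identifiers: keys and global names. -/
def IsGlobalId : PExp K G N → Prop
  | .key _ => True
  | .glob _ => True
  | _ => False

/-- The axiom system `AX_inf`. -/
inductive PrvInf : Fml K G N → Prop
  | taut {φ : Fml K G N} : Tautology φ → PrvInf φ
  | refl (p : PExp K G N) : PrvInf (.bdto p p)
  | trans (p q r : PExp K G N) :
      PrvInf ((Fml.bdto p q).imp ((Fml.bdto q r).imp (.bdto p r)))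
  | leftMono (p q r : PExp K G N) :
      PrvInf ((Fml.bdto p q).imp (.bdto (p.s r) (q.s r)))
  | assoc₁ (p q r : PExp K G N) : PrvInf (.bdto ((p.s q).s r) (p.s (q.s r)))
  | assoc₂ (p q r : PExp K G N) : PrvInf (.bdto (p.s (q.s r)) ((p.s q).s r))
  | keyGlob (k : K) (g : PExp K G N) (hg : IsGlobalId g) :
      PrvInf (.bdto ((PExp.key k).s g) g)
  | glob (p : PExp K G N) (k : K) (g : PExp K G N) (hg : IsGlobalId g) :
      PrvInf ((Fml.bdto (p.s (.key k)) (.key k)).imp (.bdto (p.s g) g))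
  | convGlob (p g : PExp K G N) (hg : IsGlobalId g) : PrvInf (.bdto g (p.s g))
  | keyLink (k : K) (n : N) (r : PExp K G N) :
      PrvInf ((Fml.cert k (.bdto (.loc n) r)).imp
        (.bdto ((PExp.key k).s (.loc n)) ((PExp.key k).s r)))
  | nonempA (p : PExp K G N) (k₁ k : K) :
      PrvInf ((Fml.bdto p (.key k₁)).imp (.bdto (p.s (.key k)) (.key k)))
  | nonempB (p q : PExp K G N) (k : K) :
      PrvInf ((Fml.not (.bdto p q)).imp (.bdto (q.s (.key k)) (.key k)))
  | nonempC (p q : PExp K G N) (k₁ k : K) :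
      PrvInf ((Fml.bdto (p.s q) (.key k₁)).imp (.bdto (p.s (.key k)) (.key k)))
  | nonempD (p : PExp K G N) (k k' : K) :
      PrvInf ((Fml.and (.bdto (p.s (.key k)) (.key k)) (.bdto (.key k') p)).imp
        (.bdto p (.key k')))
  | keyDist (k₁ k₂ : K) (hne : k₁ ≠ k₂) : PrvInf (.not (.bdto (.key k₁) (.key k₂)))
  | mp {φ ψ : Fml K G N} : PrvInf φ → PrvInf (φ.imp ψ) → PrvInf ψ

/-!
Soundness is a check of each axiom. For completeness, extend `¬φ` to a consistent list `Δ`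
deciding every prime subformula of `φ`, and read a model off `Δ`. Keys occurring in `Δ` denote
themselves; every expression over the vocabulary of `Δ` that is provably nonempty but provably
contains no such key (a *phantom*) gets a fresh key of its own, and one more fresh key is the
point of evaluation; this is where the infinitude of `K` is used. An expression `e` denotes the
keys whose names it provably contains, and the local name `n` of the key named `t` denotes what
`t's n` denotes. By the nonemptiness axioms every provably nonempty expression is provably equal
to a name, which makes this interpretation compositional in `p's q`; the truth lemma follows.
-/

infix:50 " ▷ " => Fml.bdto

section Soundness

variable {w : World K G N} {l : K → N → Set K} {k : K}

theorem sat_imp {φ ψ : Fml K G N} :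
    Sat w l k (φ.imp ψ) ↔ (Sat w l k φ → Sat w l k ψ) := by
  simp only [Fml.imp, Sat]
  tauto

open Classical in
theorem evalB_decide_sat (φ : Fml K G N) :
    evalB (fun ψ => decide (Sat w l k ψ)) φ = true ↔ Sat w l k φ := by
  induction φ with
  | not φ ih => simp [evalB, Sat, ← ih]
  | and φ ψ ihφ ihψ => simp [evalB, Sat, ihφ, ihψ]
  | _ => simp [evalB]

theorem Tautology.sat {φ : Fml K G N} (h : Tautology φ) : Sat w l k φ :=
  (evalB_decide_sat φ).1 (h _)

theorem mem_interp_s {p q : PExp K G N} {z : K} :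
    z ∈ interp w l (p.s q) k ↔ ∃ y ∈ interp w l p k, z ∈ interp w l q y := by
  simp [interp]

theorem interp_s_s (p q r : PExp K G N) :
    interp w l ((p.s q).s r) k = interp w l (p.s (q.s r)) k := by
  ext z
  simp only [mem_interp_s]
  grind

theorem interp_of_isGlobalId {g : PExp K G N} (hg : IsGlobalId g) (x y : K) :
    interp w l g x = interp w l g y := by
  cases g <;> first | rfl | exact hg.elim

theorem PrvInf.sound {φ : Fml K G N} (h : PrvInf φ) (hl : Consistent w l) : Sat w l k φ := by
  induction h with
  | taut h => exact h.sat
  | refl => exact subset_rfl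
  | trans => exact sat_imp.2 fun hpq => sat_imp.2 fun hqr => hqr.trans hpq
  | leftMono => exact sat_imp.2 fun hpq => Set.biUnion_subset_biUnion_left hpq
  | assoc₁ p q r => exact (interp_s_s p q r).ge
  | assoc₂ p q r => exact (interp_s_s p q r).le
  | keyGlob k' _ hg =>
    exact fun z hz => mem_interp_s.2 ⟨k', rfl, interp_of_isGlobalId hg k k' ▸ hz⟩
  | glob _ _ _ hg =>
    refine sat_imp.2 fun hk z hz => ?_
    obtain ⟨y, hy, -⟩ := mem_interp_s.1 (hk rfl)
    exact mem_interp_s.2 ⟨y, hy, interp_of_isGlobalId hg k y ▸ hz⟩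
  | convGlob _ _ hg =>
    intro z hz
    obtain ⟨y, -, hz⟩ := mem_interp_s.1 hz
    exact interp_of_isGlobalId hg y k ▸ hz
  | keyLink k' n r =>
    refine sat_imp.2 fun hcert z hz => ?_
    obtain ⟨y, hy, hzy⟩ := mem_interp_s.1 hz
    obtain rfl : y = k' := hy
    exact mem_interp_s.2 ⟨y, rfl, hl y n r hcert hzy⟩
  | nonempA _ k₁ => exact sat_imp.2 fun hk₁ z hz => mem_interp_s.2 ⟨k₁, hk₁ rfl, hz⟩
  | nonempB =>
    refine sat_imp.2 fun hpq z hz => ?_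
    obtain ⟨y, hy, -⟩ := Set.not_subset.1 hpq
    exact mem_interp_s.2 ⟨y, hy, hz⟩
  | nonempC =>
    refine sat_imp.2 fun hk₁ z hz => ?_
    obtain ⟨y, hy, -⟩ := mem_interp_s.1 (hk₁ rfl)
    exact mem_interp_s.2 ⟨y, hy, hz⟩
  | nonempD _ _ k' =>
    refine sat_imp.2 fun ⟨hk, hp⟩ z hz => ?_
    obtain ⟨y, hy, -⟩ := mem_interp_s.1 (hk rfl)
    obtain rfl : y = k' := hp hy
    exact hz ▸ hy
  | keyDist _ _ hne => exact fun h => hne (h rfl).symm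
  | mp _ _ ih₁ ih₂ => exact sat_imp.1 ih₂ ih₁

end Soundness

namespace PExp

def atoms : PExp K G N → List (K ⊕ G ⊕ N)
  | key k => [.inl k]
  | glob g => [.inr (.inl g)]
  | loc n => [.inr (.inr n)]
  | s p q => p.atoms ++ q.atoms

def encode (f : K ⊕ G ⊕ N → ℕ) : PExp K G N → ℕ
  | key k => Nat.pair 0 (f (.inl k))
  | glob g => Nat.pair 0 (f (.inr (.inl g)))
  | loc n => Nat.pair 0 (f (.inr (.inr n)))
  | s p q => Nat.pair (p.encode f + 1) (q.encode f)

theorem injOn_encode {f : K ⊕ G ⊕ N → ℕ} {S : Set (K ⊕ G ⊕ N)} (hf : S.InjOn f) :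
    {p : PExp K G N | ∀ a ∈ p.atoms, a ∈ S}.InjOn (encode f) := by
  intro p hp q hq h
  induction p generalizing q with
  | s p₁ p₂ ih₁ ih₂ =>
    cases q <;> simp only [encode, Nat.pair_eq_pair, Nat.add_right_cancel_iff] at h <;> try omega
    simp only [Set.mem_ofPred_eq, atoms, List.mem_append] at hp hq
    rw [ih₁ (fun a ha => hp a (.inl ha)) (fun a ha => hq a (.inl ha)) h.1,
      ih₂ (fun a ha => hp a (.inr ha)) (fun a ha => hq a (.inr ha)) h.2]
  | _ =>
    cases q <;> simp only [encode, Nat.pair_eq_pair] at h <;> try omega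
    all_goals
      simpa using hf (hp _ (List.mem_singleton_self _)) (hq _ (List.mem_singleton_self _)) h.2

end PExp

def Fml.atoms : Fml K G N → List (K ⊕ G ⊕ N)
  | .bdto p q => p.atoms ++ q.atoms
  | .cert k ψ => .inl k :: ψ.atoms
  | .not ψ => ψ.atoms
  | .and ψ χ => ψ.atoms ++ χ.atoms

def Fml.primes : Fml K G N → List (Fml K G N)
  | .bdto p q => [.bdto p q]
  | .cert k ψ => [.cert k ψ]
  | .not ψ => ψ.primes
  | .and ψ χ => ψ.primes ++ χ.primes

namespace LLNC

/-- `Derives [χ₁, …, χₙ] ψ` means `⊢ χₙ → ⋯ → χ₁ → ψ`, so that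
`Derives (χ :: Δ) ψ` is definitionally `Derives Δ (χ.imp ψ)`. -/
def Derives (Δ : List (Fml K G N)) (ψ : Fml K G N) : Prop :=
  PrvInf (Δ.foldl (fun acc χ => χ.imp acc) ψ)

def IsConsistent (Δ : List (Fml K G N)) : Prop :=
  ∀ ψ, Derives Δ ψ → ¬ Derives Δ ψ.not

namespace Derives

variable {Δ : List (Fml K G N)} {φ ψ χ : Fml K G N}

theorem cons_iff : Derives (φ :: Δ) ψ ↔ Derives Δ (φ.imp ψ) := Iff.rfl

theorem of_prv (h : PrvInf ψ) : Derives Δ ψ := by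
  induction Δ generalizing ψ with
  | nil => exact h
  | cons φ Δ ih => exact ih (.mp h (.taut fun v => by simp only [Fml.imp, evalB]; grind))

theorem mp (h : Derives Δ (φ.imp ψ)) (hφ : Derives Δ φ) : Derives Δ ψ := by
  induction Δ generalizing φ ψ with
  | nil => exact .mp hφ h
  | cons χ Δ ih =>
    have hS : Derives Δ ((χ.imp (φ.imp ψ)).imp ((χ.imp φ).imp (χ.imp ψ))) :=
      of_prv (.taut fun v => by simp only [Fml.imp, evalB]; grind)
    exact ih (ih hS h) hφ

theorem of_imp (h : PrvInf (φ.imp ψ)) (hφ : Derives Δ φ) : Derives Δ ψ := (of_prv h).mp hφ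

theorem of_taut (hφ : Derives Δ φ)
    (h : Tautology (φ.imp ψ) := by intro v; simp only [Fml.imp, evalB]; grind) : Derives Δ ψ :=
  of_imp (.taut h) hφ

theorem of_taut₂ (hφ : Derives Δ φ) (hψ : Derives Δ ψ)
    (h : Tautology (φ.imp (ψ.imp χ)) := by intro v; simp only [Fml.imp, evalB]; grind) :
    Derives Δ χ :=
  (of_taut hφ h).mp hψ

theorem of_mem (h : ψ ∈ Δ) : Derives Δ ψ := by
  induction Δ with
  | nil => cases h
  | cons φ Δ ih =>
    rcases List.mem_cons.1 h with rfl | h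
    · exact cons_iff.2 (of_prv (.taut fun v => by simp only [Fml.imp, evalB]; grind))
    · exact cons_iff.2 (of_taut (ih h))

theorem refl (p : PExp K G N) : Derives Δ (p ▷ p) := of_prv (.refl p)

theorem trans {p q r : PExp K G N} (hpq : Derives Δ (p ▷ q)) (hqr : Derives Δ (q ▷ r)) :
    Derives Δ (p ▷ r) :=
  (of_imp (.trans p q r) hpq).mp hqr

theorem leftMono {p q : PExp K G N} (h : Derives Δ (p ▷ q)) (r : PExp K G N) :
    Derives Δ (p.s r ▷ q.s r) :=
  of_imp (.leftMono p q r) h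

theorem and_iff : Derives Δ (φ.and ψ) ↔ Derives Δ φ ∧ Derives Δ ψ :=
  ⟨fun h => ⟨of_taut h, of_taut h⟩, fun ⟨hφ, hψ⟩ => of_taut₂ hφ hψ⟩

theorem not_iff (hΔ : IsConsistent Δ) (h : Derives Δ φ ∨ Derives Δ φ.not) :
    Derives Δ φ.not ↔ ¬ Derives Δ φ :=
  ⟨fun hn hφ => hΔ φ hφ hn, h.resolve_left⟩

theorem iff_mem (hΔ : IsConsistent Δ) (h : φ ∈ Δ ∨ φ.not ∈ Δ) :
    Derives Δ φ ↔ φ ∈ Δ :=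
  ⟨fun hφ => h.resolve_right fun hn => hΔ φ hφ (of_mem hn), of_mem⟩

theorem or_not_of_primes (h : ∀ χ ∈ ψ.primes, Derives Δ χ ∨ Derives Δ χ.not) :
    Derives Δ ψ ∨ Derives Δ ψ.not := by
  induction ψ with
  | bdto p q => exact h _ (List.mem_singleton_self _)
  | cert k ψ => exact h _ (List.mem_singleton_self _)
  | not ψ ih =>
    exact (ih h).symm.imp_right of_taut
  | and φ ψ ihφ ihψ =>
    simp only [Fml.primes, List.mem_append] at h
    rcases ihφ fun χ hχ => h χ (.inl hχ) with hφ | hφ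
    · rcases ihψ fun χ hχ => h χ (.inr hχ) with hψ | hψ
      · exact .inl (and_iff.2 ⟨hφ, hψ⟩)
      · exact .inr (of_taut hψ)
    · exact .inr (of_taut hφ)

theorem not_of_not_isConsistent_cons (h : ¬ IsConsistent (φ :: Δ)) : Derives Δ φ.not := by
  simp only [IsConsistent, not_forall, not_not] at h
  obtain ⟨ψ, hψ, hnψ⟩ := h
  exact of_taut₂ hψ hnψ

end Derives

theorem IsConsistent.cons_or {Δ : List (Fml K G N)} (hΔ : IsConsistent Δ) (φ : Fml K G N) :
    IsConsistent (φ :: Δ) ∨ IsConsistent (φ.not :: Δ) := by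
  by_contra! h
  exact hΔ _ (.not_of_not_isConsistent_cons h.1) (.not_of_not_isConsistent_cons h.2)

theorem isConsistent_singleton_not {φ : Fml K G N} (h : ¬ PrvInf φ) : IsConsistent [φ.not] := by
  by_contra hc
  exact h (Derives.of_taut (Δ := []) (Derives.not_of_not_isConsistent_cons hc))

theorem IsConsistent.exists_decides {L : List (Fml K G N)} (hL : IsConsistent L)
    (S : List (Fml K G N)) :
    ∃ Δ, IsConsistent Δ ∧ L ⊆ Δ ∧ ∀ χ ∈ S, χ ∈ Δ ∨ χ.not ∈ Δ := by
  induction S generalizing L with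
  | nil => exact ⟨L, hL, List.Subset.refl L, by simp⟩
  | cons χ S ih =>
    obtain ⟨L', hL', hLL', hχ⟩ :
        ∃ L', IsConsistent L' ∧ L ⊆ L' ∧ (χ ∈ L' ∨ χ.not ∈ L') := by
      rcases hL.cons_or χ with h | h
      exacts [⟨_, h, List.subset_cons_self _ _, .inl List.mem_cons_self⟩,
        ⟨_, h, List.subset_cons_self _ _, .inr List.mem_cons_self⟩]
    obtain ⟨Δ, hΔ, hL'Δ, hS⟩ := ih hL'
    refine ⟨Δ, hΔ, List.Subset.trans hLL' hL'Δ, ?_⟩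
    rintro ψ (_ | ⟨_, hψ⟩)
    exacts [hχ.imp (@hL'Δ _) (@hL'Δ _), hS ψ hψ]

section Vocabulary

variable (Δ : List (Fml K G N))

def vocab : List (K ⊕ G ⊕ N) := Δ.flatMap Fml.atoms

def InVocab (p : PExp K G N) : Prop := p.atoms ⊆ vocab Δ

def namedKeys : Set K := {k | .inl k ∈ vocab Δ}

noncomputable def symbolCode : K ⊕ G ⊕ N → ℕ :=
  (Set.countable_iff_exists_injOn.1 (vocab Δ).finite_toSet.countable).choose

variable {Δ}

theorem atoms_subset_vocab {ψ : Fml K G N} (h : ψ ∈ Δ) : ψ.atoms ⊆ vocab Δ :=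
  fun _ ha => List.mem_flatMap_of_mem h ha

theorem inVocab_s {p q : PExp K G N} : InVocab Δ (p.s q) ↔ InVocab Δ p ∧ InVocab Δ q :=
  List.append_subset

theorem inVocab_key {k : K} : InVocab Δ (.key k) ↔ k ∈ namedKeys Δ := by
  simp [InVocab, PExp.atoms, namedKeys]

theorem namedKeys_finite : (namedKeys Δ).Finite :=
  (vocab Δ).finite_toSet.preimage Sum.inl_injective.injOn

theorem symbolCode_injOn : {a | a ∈ vocab Δ}.InjOn (symbolCode Δ) :=
  (Set.countable_iff_exists_injOn.1 (vocab Δ).finite_toSet.countable).choose_spec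

end Vocabulary

section Canonical

variable [Infinite K] (Δ : List (Fml K G N))

noncomputable def freshKey (n : ℕ) : K :=
  ((namedKeys_finite (Δ := Δ)).infinite_compl.natEmbedding _ n).1

noncomputable def selfKey : K := freshKey Δ 0

noncomputable def phantomKey (t : PExp K G N) : K := freshKey Δ (t.encode (symbolCode Δ) + 1)

/-- `t's k ▷ k` says that `t` is nonempty; by Nonemptiness (c) any fixed key `k` would do. -/
def ProvNonempty (t : PExp K G N) : Prop :=
  Derives Δ (t.s (.key (selfKey Δ)) ▷ .key (selfKey Δ))

def Pinned (t : PExp K G N) : Prop := ∃ k ∈ namedKeys Δ, Derives Δ (.key k ▷ t)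

def IsPhantom (t : PExp K G N) : Prop := InVocab Δ t ∧ ProvNonempty Δ t ∧ ¬ Pinned Δ t

def Names (t : PExp K G N) (x : K) : Prop :=
  (x ∈ namedKeys Δ ∧ t = .key x) ∨ (IsPhantom Δ t ∧ x = phantomKey Δ t)

def den (e : PExp K G N) : Set K := {x | ∃ t, Names Δ t x ∧ Derives Δ (e ▷ t)}

open Classical in
/-- What `p` denotes when read at `x`: `t's p` if `t` names `x`, and `p` itself at `selfKey`. -/
noncomputable def anchor (x : K) (p : PExp K G N) : PExp K G N :=
  if h : ∃ t, Names Δ t x then h.choose.s p else p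

noncomputable def canonWorld : World K G N where
  beta g := den Δ (.glob g)
  certs k := {ψ | .cert k ψ ∈ Δ}
  finite_certs := by
    have hfin : {kψ : K × Fml K G N | .cert kψ.1 kψ.2 ∈ Δ}.Finite :=
      Δ.finite_toSet.preimage fun ⟨_, _⟩ _ ⟨_, _⟩ _ h => by cases h; rfl
    exact (hfin.image Prod.snd).subset (Set.iUnion_subset fun k ψ hψ => ⟨(k, ψ), hψ, rfl⟩)

noncomputable def canonLocal (x : K) (n : N) : Set K := den Δ (anchor Δ x (.loc n))

variable {Δ}

theorem freshKey_injective : Function.Injective (freshKey Δ) :=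
  Subtype.val_injective.comp (Set.Infinite.natEmbedding _ _).injective

theorem freshKey_not_mem (n : ℕ) : freshKey Δ n ∉ namedKeys Δ :=
  (Set.Infinite.natEmbedding _ namedKeys_finite.infinite_compl n).2

theorem phantomKey_ne_selfKey (t : PExp K G N) : phantomKey Δ t ≠ selfKey Δ :=
  fun h => Nat.succ_ne_zero _ (freshKey_injective h)

theorem eq_of_phantomKey_eq {t t' : PExp K G N} (ht : InVocab Δ t) (ht' : InVocab Δ t')
    (h : phantomKey Δ t = phantomKey Δ t') : t = t' :=
  PExp.injOn_encode symbolCode_injOn ht ht' (Nat.succ_injective (freshKey_injective h))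

variable {t t' : PExp K G N} {x : K}

theorem Names.inVocab (h : Names Δ t x) : InVocab Δ t := by
  rcases h with ⟨hx, rfl⟩ | ⟨ht, -⟩
  exacts [inVocab_key.2 hx, ht.1]

theorem Names.provNonempty (h : Names Δ t x) : ProvNonempty Δ t := by
  rcases h with ⟨-, rfl⟩ | ⟨ht, -⟩
  exacts [.of_imp (.nonempA _ x _) (.refl _), ht.2.1]

theorem Names.unique (h : Names Δ t x) (h' : Names Δ t' x) : t = t' := by
  rcases h with ⟨hx, rfl⟩ | ⟨ht, rfl⟩ <;> rcases h' with ⟨hx', rfl⟩ | ⟨ht', hx'⟩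
  · rfl
  · exact absurd (hx' ▸ hx) (freshKey_not_mem _)
  · exact absurd hx' (freshKey_not_mem _)
  · exact eq_of_phantomKey_eq ht.1 ht'.1 hx'

theorem not_names_selfKey : ¬ Names Δ t (selfKey Δ) := by
  rintro (⟨h, -⟩ | ⟨-, h⟩)
  exacts [freshKey_not_mem 0 h, phantomKey_ne_selfKey t h.symm]

theorem anchor_of_names (h : Names Δ t x) (p : PExp K G N) : anchor Δ x p = t.s p := by
  have hx : ∃ t, Names Δ t x := ⟨t, h⟩
  rw [anchor, dif_pos hx, hx.choose_spec.unique h]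

theorem anchor_selfKey (p : PExp K G N) : anchor Δ (selfKey Δ) p = p :=
  dif_neg fun ⟨_, h⟩ => not_names_selfKey h

theorem anchor_eq_or (x : K) :
    (∃ t, Names Δ t x ∧ ∀ p, anchor Δ x p = t.s p) ∨ ∀ p, anchor Δ x p = p := by
  by_cases hx : ∃ t, Names Δ t x
  · obtain ⟨t, ht⟩ := hx
    exact .inl ⟨t, ht, anchor_of_names ht⟩
  · exact .inr fun p => dif_neg hx

theorem inVocab_anchor {p : PExp K G N} (hp : InVocab Δ p) (x : K) :
    InVocab Δ (anchor Δ x p) := by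
  rcases anchor_eq_or x with ⟨t, ht, h⟩ | h <;> rw [h]
  · exact inVocab_s.2 ⟨ht.inVocab, hp⟩
  · exact hp

variable {a b e g p q : PExp K G N}

theorem den_mono (h : Derives Δ (a ▷ b)) : den Δ b ⊆ den Δ a :=
  fun _ ⟨t, ht, hbt⟩ => ⟨t, ht, h.trans hbt⟩

theorem den_eq (h₁ : Derives Δ (a ▷ b)) (h₂ : Derives Δ (b ▷ a)) : den Δ a = den Δ b :=
  (den_mono h₂).antisymm (den_mono h₁)

theorem den_anchor_of_isGlobalId (hg : IsGlobalId g) (x : K) :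
    den Δ (anchor Δ x g) = den Δ g := by
  rcases anchor_eq_or x with ⟨t, ht, h⟩ | h <;> rw [h]
  exact den_eq (.of_imp (.glob t _ g hg) ht.provNonempty) (.of_prv (.convGlob t g hg))

theorem den_anchor_s (x : K) (p q : PExp K G N) :
    den Δ (anchor Δ x (p.s q)) = den Δ ((anchor Δ x p).s q) := by
  rcases anchor_eq_or x with ⟨t, -, h⟩ | h <;> rw [h, h]
  exact den_eq (.of_prv (.assoc₂ t p q)) (.of_prv (.assoc₁ t p q))

theorem den_key (hΔ : IsConsistent Δ) {k : K} (hk : k ∈ namedKeys Δ) :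
    den Δ (.key k) = {k} := by
  ext x
  constructor
  · rintro ⟨t, ⟨-, rfl⟩ | ⟨ht, -⟩, hkt⟩
    · by_contra hne
      exact hΔ _ hkt (.of_prv (.keyDist k x (Ne.symm hne)))
    · exact absurd ⟨k, hk, hkt⟩ ht.2.2
  · rintro rfl
    exact ⟨_, .inl ⟨hk, rfl⟩, .refl _⟩

theorem ProvNonempty.of_s (h : Derives Δ (e.s q ▷ t)) (ht : ProvNonempty Δ t) :
    ProvNonempty Δ e :=
  .of_imp (.nonempC e _ _ _) ((Derives.of_prv (.assoc₂ e q _)).trans ((h.leftMono _).trans ht))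

theorem exists_names_of_provNonempty (he : InVocab Δ e) (hne : ProvNonempty Δ e) :
    ∃ t x, Names Δ t x ∧ Derives Δ (e ▷ t) ∧ Derives Δ (t ▷ e) := by
  by_cases hpin : Pinned Δ e
  · obtain ⟨k, hk, hke⟩ := hpin
    refine ⟨_, k, .inl ⟨hk, rfl⟩, ?_, hke⟩
    exact .of_imp (.nonempD e _ k) (Derives.and_iff.2 ⟨hne, hke⟩)
  · exact ⟨e, _, .inr ⟨⟨he, hne, hpin⟩, rfl⟩, .refl e, .refl e⟩

theorem den_s (he : InVocab Δ e) (q : PExp K G N) :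
    den Δ (e.s q) = ⋃ y ∈ den Δ e, den Δ (anchor Δ y q) := by
  refine subset_antisymm (fun z hz => ?_) (Set.iUnion₂_subset fun y ⟨t, hy, het⟩ => ?_)
  · have ⟨t, hzt, hqt⟩ := hz
    obtain ⟨t', y, hy, het', ht'e⟩ :=
      exists_names_of_provNonempty he (hzt.provNonempty.of_s hqt)
    refine Set.mem_biUnion ⟨t', hy, het'⟩ ?_
    rw [anchor_of_names hy]
    exact den_mono (ht'e.leftMono q) hz
  · rw [anchor_of_names hy]
    exact den_mono (het.leftMono q)

theorem not_den_subset (hΔ : IsConsistent Δ) (hq : InVocab Δ q) (h : Derives Δ (p ▷ q).not) :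
    ¬ den Δ q ⊆ den Δ p := by
  intro hsub
  obtain ⟨t, y, hy, hqt, htq⟩ := exists_names_of_provNonempty hq (.of_imp (.nonempB p q _) h)
  obtain ⟨t', hy', hpt'⟩ := hsub ⟨t, hy, hqt⟩
  rw [hy'.unique hy] at hpt'
  exact hΔ _ (hpt'.trans htq) h

theorem interp_canon (hΔ : IsConsistent Δ) (hp : InVocab Δ p) (x : K) :
    interp (canonWorld Δ) (canonLocal Δ) p x = den Δ (anchor Δ x p) := by
  induction p generalizing x with
  | key k =>
    rw [den_anchor_of_isGlobalId (g := .key k) trivial, den_key hΔ (inVocab_key.1 hp)]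
    rfl
  | glob g =>
    rw [den_anchor_of_isGlobalId (g := .glob g) trivial]
    rfl
  | loc n => rfl
  | s p q ihp ihq =>
    obtain ⟨hp, hq⟩ := inVocab_s.1 hp
    rw [den_anchor_s, den_s (inVocab_anchor hp x), ← ihp hp]
    exact Set.iUnion₂_congr fun y _ => ihq hq y

theorem canonLocal_consistent (hΔ : IsConsistent Δ) :
    Consistent (canonWorld Δ) (canonLocal Δ) := by
  intro k n p hcert
  have hmem : Fml.cert k (.loc n ▷ p) ∈ Δ := hcert
  have hatoms := atoms_subset_vocab hmem
  simp only [Fml.atoms, PExp.atoms, List.cons_subset, List.singleton_append] at hatoms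
  have hk : Names Δ (.key k) k := .inl ⟨hatoms.1, rfl⟩
  show interp _ _ p k ⊆ canonLocal Δ k n
  rw [interp_canon hΔ hatoms.2.2, canonLocal, anchor_of_names hk, anchor_of_names hk]
  exact den_mono (.of_imp (.keyLink k n p) (.of_mem hmem))

theorem sat_canon_iff (hΔ : IsConsistent Δ) {ψ : Fml K G N}
    (hdec : ∀ χ ∈ ψ.primes, χ ∈ Δ ∨ χ.not ∈ Δ) :
    Sat (canonWorld Δ) (canonLocal Δ) (selfKey Δ) ψ ↔ Derives Δ ψ := by
  induction ψ with
  | bdto p q =>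
    have hmem := hdec _ (List.mem_singleton_self _)
    obtain ⟨hp, hq⟩ : InVocab Δ p ∧ InVocab Δ q :=
      List.append_subset.1 (by rcases hmem with h | h <;> exact atoms_subset_vocab h)
    show interp _ _ q _ ⊆ interp _ _ p _ ↔ _
    rw [interp_canon hΔ hp, interp_canon hΔ hq, anchor_selfKey, anchor_selfKey]
    refine ⟨fun hsub => ?_, den_mono⟩
    by_contra hnd
    exact not_den_subset hΔ hq ((Derives.not_iff hΔ (hmem.imp .of_mem .of_mem)).2 hnd) hsub
  | cert k ψ => exact (Derives.iff_mem hΔ (hdec _ (List.mem_singleton_self _))).symm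
  | not ψ ih =>
    have hψ := Derives.or_not_of_primes (ψ := ψ) fun χ hχ => (hdec χ hχ).imp .of_mem .of_mem
    rw [Derives.not_iff hΔ hψ, ← ih hdec]
    rfl
  | and φ ψ ihφ ihψ =>
    simp only [Fml.primes, List.mem_append] at hdec
    rw [Derives.and_iff, ← ihφ fun χ h => hdec χ (.inl h),
      ← ihψ fun χ h => hdec χ (.inr h)]
    rfl

end Canonical
end LLNC

/-- Theorem 3.2, infinite case: if `K` is infinite, `AX_inf` is
sound and complete for LLNC with respect to the open semantics. -/
theorem axInf_sound_complete [Infinite K] (φ : Fml K G N) :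
    PrvInf φ ↔ OValid φ := by
  refine ⟨fun h ⟨w, l, k, hφ, hl⟩ => hφ (h.sound hl), fun hφ => ?_⟩
  by_contra hprv
  obtain ⟨Δ, hΔ, hsub, hdec⟩ :=
    (LLNC.isConsistent_singleton_not hprv).exists_decides φ.primes
  refine hφ ⟨_, _, LLNC.selfKey Δ, fun hsat => ?_, LLNC.canonLocal_consistent hΔ⟩
  exact hΔ φ ((LLNC.sat_canon_iff hΔ hdec).1 hsat) (.of_mem (hsub (List.mem_singleton_self _)))
end

section
/- Theorem 3.5: The open and closed semantics of LLNC validate exactly the same formulas: for every formula φ, φ is o-valid if and only if φ is c-valid. -/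
variable {K G N : Type*}

/-!
Open validity implies closed validity because the least consistent assignment is consistent.
Conversely, let `l` be consistent with `w` and `w, l, k₀ ⊨ ¬φ`. Call two keys equivalent when no
set that matters for evaluating `φ` at `k₀` separates them: the singletons of `k₀` and of the keys
in `φ`, and, for each expression of `φ` evaluated at such a key, its value and the sets at which
it looks up local names. There are finitely many classes. Saturating `l` over classes,
restricting it to the names of `φ` and mapping it to class representatives yields an assignment
with finitely many bindings. It becomes the least consistent one once the world issues a
certificate forcing each of them, besides the certificates `φ` mentions. Evaluation of `φ` at
`k₀` is unchanged, so `¬φ` survives.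
-/

namespace PExp

def keys : PExp K G N → Set K
  | key k => {k}
  | glob _ => ∅
  | loc _ => ∅
  | s p q => p.keys ∪ q.keys

def names : PExp K G N → Set N
  | key _ => ∅
  | glob _ => ∅
  | loc n => {n}
  | s p q => p.names ∪ q.names

def size : PExp K G N → ℕ
  | key _ => 1
  | glob _ => 1
  | loc _ => 1
  | s p q => p.size + q.size + 1

def tower (k : K) : ℕ → PExp K G N
  | 0 => key k
  | m + 1 => s (key k) (tower k m)

theorem finite_keys (e : PExp K G N) : e.keys.Finite := by
  induction e <;> simp_all [keys]

theorem finite_names (e : PExp K G N) : e.names.Finite := by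
  induction e <;> simp_all [names]

theorem lt_size_tower (k : K) (m : ℕ) : m < (tower k m : PExp K G N).size := by
  induction m <;> simp only [tower, size] <;> omega

end PExp

namespace Fml

def subformulas : Fml K G N → Set (Fml K G N)
  | bdto p q => {bdto p q}
  | cert k φ => insert (cert k φ) φ.subformulas
  | not φ => insert (not φ) φ.subformulas
  | and φ ψ => insert (and φ ψ) (φ.subformulas ∪ ψ.subformulas)

def size : Fml K G N → ℕ
  | bdto p q => p.size + q.size + 1
  | cert _ φ => φ.size + 1
  | not φ => φ.size + 1
  | and φ ψ => φ.size + ψ.size + 1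

def exprs (φ : Fml K G N) : Set (PExp K G N) :=
  {e | ∃ f, bdto e f ∈ φ.subformulas ∨ bdto f e ∈ φ.subformulas}

def names (φ : Fml K G N) : Set N := ⋃ e ∈ φ.exprs, e.names

def issuers (φ : Fml K G N) : Set K := {k | ∃ ψ, cert k ψ ∈ φ.subformulas}

theorem mem_subformulas_self (φ : Fml K G N) : φ ∈ φ.subformulas := by
  cases φ <;> simp [subformulas]

theorem subformulas_subset {φ ψ : Fml K G N} (h : ψ ∈ φ.subformulas) :
    ψ.subformulas ⊆ φ.subformulas := by
  induction φ with
  | bdto p q => simp_all [subformulas]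
  | cert k χ ih | not χ ih =>
    rcases h with rfl | h
    · rfl
    · exact (ih h).trans (Set.subset_insert _ _)
  | and χ₁ χ₂ ih₁ ih₂ =>
    rcases h with rfl | h | h
    · rfl
    · exact (ih₁ h).trans (Set.subset_union_left.trans (Set.subset_insert _ _))
    · exact (ih₂ h).trans (Set.subset_union_right.trans (Set.subset_insert _ _))

theorem size_le_of_mem_subformulas {φ ψ : Fml K G N} (h : ψ ∈ φ.subformulas) :
    ψ.size ≤ φ.size := by
  induction φ with
  | bdto p q => simp_all [subformulas]
  | cert k χ ih | not χ ih =>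
    rcases h with rfl | h
    · rfl
    · exact (ih h).trans (by simp [size])
  | and χ₁ χ₂ ih₁ ih₂ =>
    rcases h with rfl | h | h
    · rfl
    · exact (ih₁ h).trans (by simp [size]; omega)
    · exact (ih₂ h).trans (by simp [size]; omega)

theorem finite_subformulas (φ : Fml K G N) : φ.subformulas.Finite := by
  induction φ <;> simp_all [subformulas]

theorem finite_exprs (φ : Fml K G N) : φ.exprs.Finite := by
  have hP := φ.finite_subformulas.preimage
    (f := fun x : PExp K G N × PExp K G N => bdto x.1 x.2) (by
      intro x _ y _ h; simpa [Prod.ext_iff] using h)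
  refine ((hP.image Prod.fst).union (hP.image Prod.snd)).subset ?_
  rintro e ⟨f, h | h⟩
  · exact Or.inl ⟨(e, f), h, rfl⟩
  · exact Or.inr ⟨(f, e), h, rfl⟩

theorem finite_names (φ : Fml K G N) : φ.names.Finite :=
  φ.finite_exprs.biUnion fun e _ => e.finite_names

theorem finite_issuers (φ : Fml K G N) : φ.issuers.Finite := by
  have hP := φ.finite_subformulas.preimage
    (f := fun x : K × Fml K G N => cert x.1 x.2) (by
      intro x _ y _ h; simpa [Prod.ext_iff] using h)
  exact (hP.image Prod.fst).subset fun k ⟨ψ, h⟩ => ⟨(k, ψ), h, rfl⟩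

end Fml

namespace LLNC

theorem interp_tower (w : World K G N) (l : K → N → Set K) (k : K) (m : ℕ) (x : K) :
    interp w l (PExp.tower k m) x = {k} := by
  induction m generalizing x <;> simp_all [PExp.tower, interp]

section Evaluation

variable (w : World K G N) (l : K → N → Set K)

def interpSet (e : PExp K G N) (S : Set K) : Set K := ⋃ x ∈ S, interp w l e x

theorem interpSet_singleton (e : PExp K G N) (x : K) : interpSet w l e {x} = interp w l e x := by
  simp [interpSet]

theorem interpSet_s (p q : PExp K G N) (S : Set K) :
    interpSet w l (.s p q) S = interpSet w l q (interpSet w l p S) := by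
  simp only [interpSet, interp, Set.biUnion_iUnion]

def lookupSets : PExp K G N → Set K → Set (Set K)
  | .key _, _ => ∅
  | .glob _, _ => ∅
  | .loc _, S => {S}
  | .s p q, S => lookupSets p S ∪ lookupSets q (interpSet w l p S)

theorem finite_lookupSets (e : PExp K G N) (S : Set K) : (lookupSets w l e S).Finite := by
  induction e generalizing S <;> simp_all [lookupSets]

theorem interp_image (f : K → K) {w' : World K G N} {l' : K → N → Set K}
    (hβ : ∀ g, w'.beta g = f '' w.beta g) (hl : ∀ x n, l' (f x) n = f '' l x n)
    {e : PExp K G N} (he : ∀ k ∈ e.keys, f k = k) (x : K) :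
    interp w' l' e (f x) = f '' interp w l e x := by
  induction e generalizing x with
  | key k => simp [interp, he k (by simp [PExp.keys])]
  | glob g => exact hβ g
  | loc n => exact hl x n
  | s p q ihp ihq =>
    simp only [PExp.keys, Set.mem_union] at he
    simp only [interp, ihp (fun k hk => he k (.inl hk)), Set.biUnion_image,
      ihq (fun k hk => he k (.inr hk)), Set.image_iUnion₂]

end Evaluation

section Representatives

variable {T : Type*} (τ : K → T)

noncomputable def rep (x : K) : K := (Quotient.mk (Setoid.ker τ) x).out

theorem apply_rep (x : K) : τ (rep τ x) = τ x := Setoid.ker_apply_mk_out x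

theorem rep_eq_self {x : K} (hx : ∀ y, τ y = τ x → y = x) : rep τ x = x :=
  hx _ (apply_rep τ x)

theorem finite_range_rep [Finite T] : (Set.range (rep τ)).Finite := by
  refine Set.Finite.of_finite_image (f := τ) (Set.toFinite _) ?_
  rintro _ ⟨x, rfl⟩ _ ⟨y, rfl⟩ h
  rw [apply_rep τ, apply_rep τ] at h
  exact congrArg Quotient.out (Quotient.sound h)

theorem image_rep_subset_image_rep_iff {A B : Set K}
    (hB : ∀ ⦃x y⦄, τ x = τ y → x ∈ B → y ∈ B) : rep τ '' A ⊆ rep τ '' B ↔ A ⊆ B := by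
  refine ⟨fun h x hx => ?_, Set.image_mono⟩
  obtain ⟨y, hy, hxy⟩ := h (Set.mem_image_of_mem _ hx)
  exact hB (by rw [← apply_rep τ y, hxy, apply_rep τ]) hy

def saturate (A : Set N) (l : K → N → Set K) (x : K) (n : N) : Set K :=
  {z | n ∈ A ∧ ∃ y, τ y = τ x ∧ z ∈ l y n}

theorem saturate_congr (A : Set N) (l : K → N → Set K) {x y : K} (h : τ x = τ y) :
    saturate τ A l x = saturate τ A l y := by
  unfold saturate
  simp only [h]

theorem subset_saturate {A : Set N} (l : K → N → Set K) (x : K) {n : N} (hn : n ∈ A) :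
    l x n ⊆ saturate τ A l x n :=
  fun _ hz => ⟨hn, x, rfl, hz⟩

theorem interpSet_saturate (w : World K G N) {A : Set N} (l : K → N → Set K) {e : PExp K G N}
    (hA : e.names ⊆ A) {S : Set K}
    (hS : ∀ R ∈ lookupSets w l e S, ∀ ⦃x y⦄, τ x = τ y → x ∈ R → y ∈ R) :
    interpSet w (saturate τ A l) e S = interpSet w l e S := by
  induction e generalizing S with
  | key k => rfl
  | glob g => rfl
  | loc n =>
    have hn : n ∈ A := hA rfl
    have hS : ∀ ⦃x y⦄, τ x = τ y → x ∈ S → y ∈ S := hS S rfl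
    ext z
    simp only [interpSet, interp, saturate, Set.mem_iUnion, Set.mem_ofPred_eq, exists_prop]
    constructor
    · rintro ⟨x, hx, -, y, hyx, hz⟩
      exact ⟨y, hS hyx.symm hx, hz⟩
    · rintro ⟨x, hx, hz⟩
      exact ⟨x, hx, hn, x, rfl, hz⟩
  | s p q ihp ihq =>
    simp only [PExp.names, Set.union_subset_iff] at hA
    simp only [lookupSets, Set.mem_union] at hS
    rw [interpSet_s, interpSet_s, ihp hA.1 (fun R hR => hS R (.inl hR)),
      ihq hA.2 (fun R hR => hS R (.inr hR))]

end Representatives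

section Filtration

variable (w : World K G N) (l : K → N → Set K) (φ : Fml K G N) (k₀ : K)

def anchors : Set K := insert k₀ ((⋃ e ∈ φ.exprs, e.keys) ∪ φ.issuers)

def separators : Set (Set K) :=
  ((fun d => {d}) '' anchors φ k₀) ∪
    ⋃ e ∈ φ.exprs, ⋃ k ∈ anchors φ k₀, insert (interp w l e k) (lookupSets w l e {k})

def keyType (x : K) : separators w l φ k₀ → Prop := fun R => x ∈ R.1

noncomputable def filtrationAssignment (x : K) (n : N) : Set K :=
  rep (keyType w l φ k₀) '' saturate (keyType w l φ k₀) φ.names l x n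

theorem finite_anchors : (anchors φ k₀).Finite :=
  (((φ.finite_exprs.biUnion fun e _ => e.finite_keys).union φ.finite_issuers)).insert k₀

theorem finite_separators : (separators w l φ k₀).Finite :=
  ((finite_anchors φ k₀).image _).union <| φ.finite_exprs.biUnion fun e _ =>
    (finite_anchors φ k₀).biUnion fun k _ => (finite_lookupSets w l e {k}).insert _

theorem finite_range_rep_keyType : (Set.range (rep (keyType w l φ k₀))).Finite :=
  have := (finite_separators w l φ k₀).to_subtype
  finite_range_rep _

/-- Each binding of `filtrationAssignment` is forced by a certificate `n ▷ κ's⋯'sκ`, made longer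
than `φ` so that it is not one of the certificates `φ` speaks about. -/
noncomputable def filtration : World K G N where
  beta g := rep (keyType w l φ k₀) '' w.beta g
  certs k := {ψ | ψ ∈ w.certs k ∧ .cert k ψ ∈ φ.subformulas} ∪
    {ψ | ∃ n κ, κ ∈ filtrationAssignment w l φ k₀ k n ∧ ψ = .bdto (.loc n) (.tower κ φ.size)}
  finite_certs := by
    refine (w.finite_certs.union (((φ.finite_names.prod (finite_range_rep_keyType w l φ k₀)).image
      fun nκ => Fml.bdto (.loc nκ.1) (.tower nκ.2 φ.size)))).subset ?_
    simp only [Set.iUnion_subset_iff]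
    rintro k ψ (⟨hψ, -⟩ | ⟨n, _, ⟨κ, ⟨hn, -⟩, rfl⟩, rfl⟩)
    · exact .inl (Set.mem_iUnion_of_mem k hψ)
    · exact .inr ⟨(n, _), ⟨hn, κ, rfl⟩, rfl⟩

theorem mem_of_keyType_eq {R : Set K} (hR : R ∈ separators w l φ k₀) {x y : K}
    (h : keyType w l φ k₀ x = keyType w l φ k₀ y) (hx : x ∈ R) : y ∈ R :=
  (congrFun h ⟨R, hR⟩).mp hx

theorem rep_anchor {d : K} (hd : d ∈ anchors φ k₀) : rep (keyType w l φ k₀) d = d :=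
  rep_eq_self _ fun _ h =>
    mem_of_keyType_eq w l φ k₀ (.inl ⟨d, hd, rfl⟩) h.symm rfl

theorem interp_filtration {e : PExp K G N} (he : e ∈ φ.exprs) {k : K} (hk : k ∈ anchors φ k₀) :
    interp (filtration w l φ k₀) (filtrationAssignment w l φ k₀) e k =
      rep (keyType w l φ k₀) '' interp w l e k := by
  set τ := keyType w l φ k₀
  have hkeys : ∀ k' ∈ e.keys, rep τ k' = k' := fun k' hk' =>
    rep_anchor w l φ k₀ (.inr (.inl (Set.mem_biUnion he hk')))
  have hnames : e.names ⊆ φ.names := Set.subset_biUnion_of_mem he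
  have hlookup : ∀ R ∈ lookupSets w l e {k}, ∀ ⦃x y⦄, τ x = τ y → x ∈ R → y ∈ R :=
    fun R hR _ _ => mem_of_keyType_eq w l φ k₀
      (.inr (Set.mem_biUnion he (Set.mem_biUnion hk (.inr hR))))
  calc interp (filtration w l φ k₀) (filtrationAssignment w l φ k₀) e k
      = interp (filtration w l φ k₀) (filtrationAssignment w l φ k₀) e (rep τ k) := by
        rw [rep_anchor w l φ k₀ hk]
    _ = rep τ '' interp w (saturate τ φ.names l) e k :=
        interp_image w _ _ (fun _ => rfl)
          (fun x n => by simp only [filtrationAssignment, saturate_congr τ _ _ (apply_rep τ x), τ])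
          hkeys k
    _ = rep τ '' interp w l e k := by
        rw [← interpSet_singleton, interpSet_saturate τ w l hnames hlookup, interpSet_singleton]

theorem mem_filtration_certs_iff {k : K} {ψ : Fml K G N} (h : .cert k ψ ∈ φ.subformulas) :
    ψ ∈ (filtration w l φ k₀).certs k ↔ ψ ∈ w.certs k := by
  refine ⟨?_, fun hψ => .inl ⟨hψ, h⟩⟩
  rintro (⟨hψ, -⟩ | ⟨n, κ, -, rfl⟩)
  · exact hψ
  · have hsize := Fml.size_le_of_mem_subformulas <|
      Fml.subformulas_subset h (Or.inr (Fml.mem_subformulas_self _))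
    have htower := PExp.lt_size_tower (G := G) (N := N) κ φ.size
    simp only [Fml.size, PExp.size] at hsize
    omega

theorem sat_filtration_iff (ψ : Fml K G N) (hψ : ψ.subformulas ⊆ φ.subformulas) :
    Sat (filtration w l φ k₀) (filtrationAssignment w l φ k₀) k₀ ψ ↔ Sat w l k₀ ψ := by
  induction ψ with
  | bdto p q =>
    have hpq : Fml.bdto p q ∈ φ.subformulas := hψ rfl
    have hk₀ : k₀ ∈ anchors φ k₀ := .inl rfl
    have hp : p ∈ φ.exprs := ⟨q, .inl hpq⟩
    simp only [Sat]
    rw [interp_filtration w l φ k₀ hp hk₀, interp_filtration w l φ k₀ ⟨p, .inr hpq⟩ hk₀]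
    exact image_rep_subset_image_rep_iff _ fun _ _ =>
      mem_of_keyType_eq w l φ k₀ (.inr (Set.mem_biUnion hp (Set.mem_biUnion hk₀ (.inl rfl))))
  | cert k χ _ => exact mem_filtration_certs_iff w l φ k₀ (hψ (Fml.mem_subformulas_self _))
  | not χ ih => exact not_congr (ih ((Set.subset_insert _ _).trans hψ))
  | and χ₁ χ₂ ih₁ ih₂ =>
    exact and_congr (ih₁ (Set.subset_union_left.trans ((Set.subset_insert _ _).trans hψ)))
      (ih₂ (Set.subset_union_right.trans ((Set.subset_insert _ _).trans hψ)))

theorem consistent_filtration (hl : Consistent w l) :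
    Consistent (filtration w l φ k₀) (filtrationAssignment w l φ k₀) := by
  rintro k n p (⟨hc, hsub⟩ | ⟨n', κ, hκ, hnp⟩)
  · have hbind : Fml.bdto (.loc n) p ∈ φ.subformulas :=
      Fml.subformulas_subset hsub (Or.inr (Fml.mem_subformulas_self _))
    have hn : n ∈ φ.names := Set.mem_biUnion (⟨p, .inl hbind⟩ : PExp.loc n ∈ φ.exprs) rfl
    show interp _ _ p k ⊆ filtrationAssignment w l φ k₀ k n
    rw [interp_filtration w l φ k₀ ⟨_, .inr hbind⟩ (.inr (.inr ⟨_, hsub⟩))]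
    exact Set.image_mono ((hl k n p hc).trans (subset_saturate _ l k hn))
  · obtain ⟨rfl, rfl⟩ : n = n' ∧ p = .tower κ φ.size := by simpa using hnp
    show interp _ _ (.tower κ φ.size) k ⊆ filtrationAssignment w l φ k₀ k n
    rw [interp_tower]
    exact Set.singleton_subset_iff.mpr hκ

theorem filtrationAssignment_subset {l' : K → N → Set K}
    (hl' : Consistent (filtration w l φ k₀) l') (k : K) (n : N) :
    filtrationAssignment w l φ k₀ k n ⊆ l' k n := fun κ hκ => by
  simpa only [Sat, interp, interp_tower, Set.singleton_subset_iff] using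
    hl' k n (.tower κ φ.size) (.inr ⟨n, κ, hκ, rfl⟩)

end Filtration

theorem exists_isMinConsistent_sat_iff {w : World K G N} {l : K → N → Set K}
    (hl : Consistent w l) (φ : Fml K G N) (k : K) :
    ∃ w' lw', IsMinConsistent w' lw' ∧ (Sat w' lw' k φ ↔ Sat w l k φ) :=
  ⟨_, _, ⟨consistent_filtration w l φ k hl, fun _ => filtrationAssignment_subset w l φ k⟩,
    sat_filtration_iff w l φ k φ subset_rfl⟩

end LLNC

theorem oValid_iff_cValid_general (φ : Fml K G N) : OValid φ ↔ CValid φ := by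
  constructor
  · rintro hO w k lw ⟨hcons, -⟩
    by_contra hφ
    exact hO ⟨w, lw, k, hφ, hcons⟩
  · rintro hC ⟨w, l, k, hφ, hl⟩
    obtain ⟨w', lw', hmin, hiff⟩ := LLNC.exists_isMinConsistent_sat_iff hl φ k
    exact hφ (hiff.mp (hC w' k lw' hmin))

/-- Theorem 3.5: the open and closed semantics validate exactly
the same formulas. -/
theorem oValid_iff_cValid [Nonempty K] (φ : Fml K G N) : OValid φ ↔ CValid φ :=
  oValid_iff_cValid_general φ
end

section
/- Proposition 5.1 (correctness of the Datalog translation): If a Herbrand structure M represents a world w and local name assignment l, then for all principal expressions p and all x, y ∈ K ∪ G ∪ N: M ⊨ τ_{x,y}(p) if and only if x, y ∈ K and w,l,x ⊨ p ▷ y. -/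
variable {K G N : Type*}

/-- The Herbrand domain: the constants `K ∪ G ∪ N`. -/
abbrev Dom (K G N : Type*) := K ⊕ (G ⊕ N)

/-- The constant for a key. -/
def dkey (k : K) : Dom K G N := Sum.inl k

/-- The constant for a global name. -/
def dglob (g : G) : Dom K G N := Sum.inr (Sum.inl g)

/-- The constant for a local name. -/
def dloc (n : N) : Dom K G N := Sum.inr (Sum.inr n)

/-- A Herbrand structure over the vocabulary `V`, identified with the set of
tuples of the ternary predicate `name` that it satisfies. -/
abbrev Herbrand (K G N : Type*) := Set (Dom K G N × Dom K G N × Dom K G N)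

/-- Satisfaction of the translated formula `τ_{x,y}(p)` in a Herbrand
structure `M`. -/
def tauSat (M : Herbrand K G N) : PExp K G N → Dom K G N → Dom K G N → Prop
  | .key k, x, y => (x, dkey k, y) ∈ M
  | .glob g, x, y => (x, dglob g, y) ∈ M
  | .loc n, x, y => (x, dloc n, y) ∈ M
  | .s q r, x, y => ∃ z : Dom K G N, tauSat M q x z ∧ tauSat M r z y

/-- `M` represents the world `w` and the local name assignment `l`. -/
def Represents (M : Herbrand K G N) (w : World K G N) (l : K → N → Set K) : Prop :=
  ∀ x y z : Dom K G N, (x, y, z) ∈ M ↔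
    ((∃ k₁ k₂ : K, x = dkey k₁ ∧ y = dkey k₂ ∧ z = dkey k₂) ∨
     (∃ (k₁ : K) (g : G) (k₂ : K), x = dkey k₁ ∧ y = dglob g ∧ z = dkey k₂ ∧ k₂ ∈ w.beta g) ∨
     (∃ (k₁ : K) (n : N) (k₂ : K), x = dkey k₁ ∧ y = dloc n ∧ z = dkey k₂ ∧ k₂ ∈ l k₁ n))

/-!
Induction on the principal expression. For a name `a`, the representation condition says exactly
that `name(x, a, y)` holds iff `x` and `y` are keys with `y ∈ ⟦a⟧_x`. For `q's r`, the witness `z`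
of `τ_{x,y}` is then forced to be a key, and the existential over it is the union defining
`⟦q's r⟧_x`.
-/

theorem sat_bdto_key_iff {w : World K G N} {l : K → N → Set K} {k k' : K} {p : PExp K G N} :
    Sat w l k (.bdto p (.key k')) ↔ k' ∈ interp w l p k := by
  simp [Sat, interp]

theorem mem_interp_s_iff {w : World K G N} {l : K → N → Set K} {q r : PExp K G N} {k k' : K} :
    k' ∈ interp w l (.s q r) k ↔ ∃ k'' ∈ interp w l q k, k' ∈ interp w l r k'' := by
  simp [interp]

theorem Represents.tauSat_iff {M : Herbrand K G N} {w : World K G N} {l : K → N → Set K}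
    (hrep : Represents M w l) (p : PExp K G N) (x y : Dom K G N) :
    tauSat M p x y ↔ ∃ kx ky : K, x = dkey kx ∧ y = dkey ky ∧ ky ∈ interp w l p kx := by
  induction p generalizing x y with
  | key _ | glob _ | loc _ => simp [tauSat, hrep x, dkey, dglob, dloc, interp]
  | s q r ihq ihr =>
    simp only [tauSat, ihq, ihr, mem_interp_s_iff]
    constructor
    · rintro ⟨z, ⟨kx, kz, rfl, rfl, hq⟩, ⟨kz', ky, hz, rfl, hr⟩⟩
      obtain rfl := Sum.inl_injective hz
      exact ⟨kx, ky, rfl, rfl, kz, hq, hr⟩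
    · rintro ⟨kx, ky, rfl, rfl, kz, hq, hr⟩
      exact ⟨dkey kz, ⟨kx, kz, rfl, rfl, hq⟩, ⟨kz, ky, rfl, rfl, hr⟩⟩

theorem datalog_translation_correct_general (M : Herbrand K G N)
    (w : World K G N) (l : K → N → Set K) (hrep : Represents M w l)
    (p : PExp K G N) (x y : Dom K G N) :
    tauSat M p x y ↔ ∃ kx ky : K, x = dkey kx ∧ y = dkey ky ∧
      Sat w l kx (.bdto p (.key ky)) := by
  simp only [hrep.tauSat_iff, sat_bdto_key_iff]

/-- Proposition 5.1: correctness of the Datalog translation. -/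
theorem datalog_translation_correct [Nonempty K] (M : Herbrand K G N)
    (w : World K G N) (l : K → N → Set K) (hrep : Represents M w l)
    (p : PExp K G N) (x y : Dom K G N) :
    tauSat M p x y ↔ ∃ kx ky : K, x = dkey kx ∧ y = dkey ky ∧
      Sat w l kx (.bdto p (.key ky)) :=
  datalog_translation_correct_general M w l hrep p x y
end

section
/- Theorem 5.2: For every world w, the minimal Herbrand model M_w of the definite Horn theory Σ_w represents w and the minimal local name assignment l_w consistent with w. -/
variable {K G N : Type*}

/-- `M` is a Herbrand model of the definite Horn theory `Σ_w`. -/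
def SigmaModel (w : World K G N) (M : Herbrand K G N) : Prop :=
  (∀ k₁ k₂ : K, (dkey k₁, dkey k₂, dkey k₂) ∈ M) ∧
  (∀ (k₁ k₂ : K) (g : G), k₂ ∈ w.beta g → (dkey k₁, dglob g, dkey k₂) ∈ M) ∧
  (∀ (k : K) (n : N) (q : PExp K G N), Fml.bdto (.loc n) q ∈ w.certs k →
    ∀ y : Dom K G N, tauSat M q (dkey k) y → (dkey k, dloc n, y) ∈ M)

/-- `M` is the minimal Herbrand model of `Σ_w` (with respect to containment). -/
def IsMinModel (w : World K G N) (M : Herbrand K G N) : Prop :=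
  SigmaModel w M ∧ ∀ M' : Herbrand K G N, SigmaModel w M' → M ⊆ M'

/-!
A consistent local name assignment `l` yields a model of `Σ_w`: the structure representing
`w` and `l`, in which `τ_{k,y}(p)` holds only when `y` is a key in `⟦p⟧_{w,l,k}`.
Conversely, the `name(k, n, k')` facts of any model of `Σ_w` form a consistent assignment,
since `τ_{k,k'}(p)` holds in a model whenever `k' ∈ ⟦p⟧`. Minimality of `M_w` and of `l_w`
then give the two inclusions between `M_w` and the structure representing `w` and `l_w`.
-/

def reprModel (w : World K G N) (l : K → N → Set K) : Herbrand K G N :=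
  {t | (∃ k₁ k₂ : K, t.1 = dkey k₁ ∧ t.2.1 = dkey k₂ ∧ t.2.2 = dkey k₂) ∨
     (∃ (k₁ : K) (g : G) (k₂ : K), t.1 = dkey k₁ ∧ t.2.1 = dglob g ∧ t.2.2 = dkey k₂ ∧
        k₂ ∈ w.beta g) ∨
     (∃ (k₁ : K) (n : N) (k₂ : K), t.1 = dkey k₁ ∧ t.2.1 = dloc n ∧ t.2.2 = dkey k₂ ∧
        k₂ ∈ l k₁ n)}

def assignmentOf (M : Herbrand K G N) : K → N → Set K :=
  fun k n => {k' | (dkey k, dloc n, dkey k') ∈ M}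

theorem represents_iff_eq_reprModel {M : Herbrand K G N} {w : World K G N}
    {l : K → N → Set K} : Represents M w l ↔ M = reprModel w l := by
  simp only [Represents, Set.ext_iff, Prod.forall]
  rfl

theorem tauSat_reprModel {w : World K G N} {l : K → N → Set K} {p : PExp K G N}
    {x y : Dom K G N} (h : tauSat (reprModel w l) p x y) :
    ∃ k k' : K, x = dkey k ∧ y = dkey k' ∧ k' ∈ interp w l p k := by
  induction p generalizing x y with
  | key k₀ | glob g₀ | loc n₀ =>
    simpa [tauSat, reprModel, interp, dkey, dglob, dloc] using h
  | s q r ihq ihr =>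
    obtain ⟨z, hq, hr⟩ := h
    obtain ⟨k, k', rfl, rfl, hk'⟩ := ihq hq
    obtain ⟨k'', k''', hz, rfl, hk'''⟩ := ihr hr
    obtain rfl : k' = k'' := Sum.inl.inj hz
    exact ⟨k, k''', rfl, rfl, Set.mem_biUnion hk' hk'''⟩

theorem sigmaModel_reprModel {w : World K G N} {l : K → N → Set K} (hl : Consistent w l) :
    SigmaModel w (reprModel w l) := by
  refine ⟨fun k₁ k₂ => Or.inl ⟨k₁, k₂, rfl, rfl, rfl⟩,
    fun k₁ k₂ g hg => Or.inr (Or.inl ⟨k₁, g, k₂, rfl, rfl, rfl, hg⟩),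
    fun k n q hq y hy => ?_⟩
  obtain ⟨k', k'', hk, rfl, hk''⟩ := tauSat_reprModel hy
  obtain rfl : k = k' := Sum.inl.inj hk
  exact Or.inr (Or.inr ⟨k, n, k'', rfl, rfl, rfl, hl k n q hq hk''⟩)

theorem SigmaModel.tauSat_of_mem_interp {w : World K G N} {M : Herbrand K G N}
    (hM : SigmaModel w M) {p : PExp K G N} {k k' : K}
    (h : k' ∈ interp w (assignmentOf M) p k) : tauSat M p (dkey k) (dkey k') := by
  induction p generalizing k k' with
  | key k₀ =>
    obtain rfl : k' = k₀ := h
    exact hM.1 k k'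
  | glob g => exact hM.2.1 k k' g h
  | loc n => exact h
  | s q r ihq ihr =>
    obtain ⟨_, ⟨k'', rfl⟩, _, ⟨hk'', rfl⟩, hk'⟩ := h
    exact ⟨dkey k'', ihq hk'', ihr hk'⟩

theorem SigmaModel.consistent_assignmentOf {w : World K G N} {M : Herbrand K G N}
    (hM : SigmaModel w M) : Consistent w (assignmentOf M) :=
  fun k n p hp _ hk' => hM.2.2 k n p hp _ (hM.tauSat_of_mem_interp hk')

theorem SigmaModel.reprModel_subset {w : World K G N} {M : Herbrand K G N}
    (hM : SigmaModel w M) {l : K → N → Set K} (hl : ∀ k n, l k n ⊆ assignmentOf M k n) :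
    reprModel w l ⊆ M := by
  rintro ⟨x, y, z⟩ (⟨k₁, k₂, rfl, rfl, rfl⟩ | ⟨k₁, g, k₂, rfl, rfl, rfl, hg⟩ |
      ⟨k₁, n, k₂, rfl, rfl, rfl, hn⟩)
  · exact hM.1 k₁ k₂
  · exact hM.2.1 k₁ k₂ g hg
  · exact hl k₁ n hn

theorem min_herbrand_represents_general (w : World K G N)
    (M : Herbrand K G N) (hM : IsMinModel w M)
    (lw : K → N → Set K) (hlw : IsMinConsistent w lw) :
    Represents M w lw := by
  rw [represents_iff_eq_reprModel]
  apply le_antisymm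
  · exact hM.2 _ (sigmaModel_reprModel hlw.1)
  · exact hM.1.reprModel_subset (hlw.2 _ hM.1.consistent_assignmentOf)

/-- Theorem 5.2: the minimal Herbrand model of `Σ_w` represents
`w` and the minimal local name assignment consistent with `w`. -/
theorem min_herbrand_represents [Nonempty K] (w : World K G N)
    (M : Herbrand K G N) (hM : IsMinModel w M)
    (lw : K → N → Set K) (hlw : IsMinConsistent w lw) :
    Represents M w lw :=
  min_herbrand_represents_general w M hM lw hlw
end
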